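/- Let p be an odd prime, a ∈ F_p* a quadratic residue, and E: y^2 = x(x+a)^2 over F_p, whose group of non-singular points is cyclic of order p - 1 = 2^e m with m odd. Let t ∈ F_p, t ≠ 0, be such that t^2 + a is a quadratic non-residue mod p, and let P = (t^2, t(t^2 + a)). Then m·P is not the identity; consequently the order of P is even. -/

import Mathlib

/-!
If `m • P = 0` with `m` odd, then `P = 2 • Q` for `Q = ((m + 1) / 2) • P`. But on the nodal cubic
`y² = x (x + a)²` every double `2 • Q` has an `x`-coordinate `X` with `X + a` a square, which fails
for `X = t²` when `t² + a` is a non-residue. An odd order would divide the odd part `m` of the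
group order, so the order of `P` is even.
-/

open WeierstrassCurve.Affine

def nodalCubic {K : Type*} [Field K] (a : K) : WeierstrassCurve.Affine K :=
  ⟨0, 2 * a, 0, a ^ 2, 0⟩

namespace nodalCubic

variable {K : Type*} [Field K] {a x y : K}

lemma equation_iff : (nodalCubic a).Equation x y ↔ y ^ 2 = x * (x + a) ^ 2 := by
  rw [WeierstrassCurve.Affine.equation_iff]
  simp only [nodalCubic]
  constructor <;> intro h <;> linear_combination h

lemma negY_eq : (nodalCubic a).negY x y = -y := by
  simp [WeierstrassCurve.Affine.negY, nodalCubic]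

lemma add_ne_zero_of_nonsingular (h : (nodalCubic a).Nonsingular x y) : x + a ≠ 0 := by
  intro hxa
  have hy : y = 0 := pow_eq_zero_iff two_ne_zero |>.mp <| by
    rw [equation_iff.mp h.1, hxa]; ring
  obtain ⟨-, hX | hY⟩ := (nonsingular_iff' x y).mp h
  · apply hX; simp only [nodalCubic, hy, eq_neg_of_add_eq_zero_left hxa]; ring
  · apply hY; simp only [nodalCubic, hy]; ring

variable [DecidableEq K] in
lemma isSquare_addX_add (h : (nodalCubic a).Nonsingular x y) (hy : y ≠ (nodalCubic a).negY x y) :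
    IsSquare ((nodalCubic a).addX x x ((nodalCubic a).slope x x y y) + a) := by
  rw [negY_eq] at hy
  have h2y : 2 * y ≠ 0 := fun h0 => hy (by linear_combination h0)
  have h2 : (2 : K) ≠ 0 := left_ne_zero_of_mul h2y
  have hy0 : y ≠ 0 := right_ne_zero_of_mul h2y
  have hxa := add_ne_zero_of_nonsingular h
  have hE := equation_iff.mp h.1
  have hX : (nodalCubic a).addX x x ((nodalCubic a).slope x x y y)
      = ((3 * x ^ 2 + 4 * a * x + a ^ 2) / (2 * y)) ^ 2 - 2 * a - 2 * x := by
    rw [slope_of_Y_ne rfl (by rwa [negY_eq]), negY_eq]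
    simp only [WeierstrassCurve.Affine.addX, nodalCubic]
    ring
  -- writing `x = u²` with `u = y / (x + a)`, this is `(u² + a) / (2u)`
  refine ⟨y / (x + a) - (x ^ 2 - a ^ 2) / (2 * y), ?_⟩
  rw [hX]
  field_simp
  linear_combination (-4 * y ^ 2 - 8 * (x + a) ^ 3) * hE

variable [DecidableEq K] in
lemma isSquare_add_of_two_nsmul_eq {Q : (nodalCubic a).Point} (h : (nodalCubic a).Nonsingular x y)
    (hQ : 2 • Q = .some x y h) : IsSquare (x + a) := by
  rw [two_nsmul] at hQ
  cases Q with
  | zero => exact (Point.some_ne_zero h (hQ.symm.trans (zero_add _))).elim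
  | @some x₀ y₀ hQ' =>
    by_cases hy : y₀ = (nodalCubic a).negY x₀ y₀
    · rw [Point.add_self_of_Y_eq hy] at hQ
      exact (Point.some_ne_zero h hQ.symm).elim
    · rw [Point.add_self_of_Y_ne hy, Point.some.injEq] at hQ
      exact hQ.1 ▸ isSquare_addX_add hQ' hy

end nodalCubic

lemma exists_two_nsmul_eq_of_nsmul_eq_zero {G : Type*} [AddMonoid G] {P : G} {m : ℕ} (hm : Odd m)
    (h : m • P = 0) : ∃ Q : G, 2 • Q = P := by
  obtain ⟨k, rfl⟩ := hm
  refine ⟨(k + 1) • P, ?_⟩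
  rw [smul_smul, show 2 * (k + 1) = 2 * k + 1 + 1 by ring, succ_nsmul, h, zero_add]

lemma two_dvd_addOrderOf_of_nsmul_ne_zero {G : Type*} [AddGroup G] {P : G} {e m : ℕ}
    (hcard : Nat.card G = 2 ^ e * m) (h : m • P ≠ 0) : 2 ∣ addOrderOf P := by
  by_contra hodd
  have hcop : Nat.Coprime (addOrderOf P) (2 ^ e) :=
    (Nat.odd_iff.mpr (by omega)).coprime_two_right.pow_right e
  exact h (addOrderOf_dvd_iff_nsmul_eq_zero.mp
    (hcop.dvd_of_dvd_mul_left (hcard ▸ addOrderOf_dvd_natCard P)))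

lemma ZMod.not_isSquare_of_pow_div_two_eq_neg_one {p : ℕ} [Fact p.Prime] (hp : p ≠ 2) {x : ZMod p}
    (hx : x ^ (p / 2) = -1) : ¬IsSquare x := by
  have hp2 : 2 < p := lt_of_le_of_ne (Fact.out : p.Prime).two_le (Ne.symm hp)
  have : Fact (2 < p) := ⟨hp2⟩
  have hx0 : x ≠ 0 := by
    rintro rfl
    rw [zero_pow (by omega)] at hx
    exact zero_ne_one (neg_eq_zero.mp hx.symm).symm
  rw [ZMod.euler_criterion p hx0, hx]
  exact ZMod.neg_one_ne_one

theorem cipolla_singular_cubic_general (p : ℕ) [hp : Fact p.Prime] (hodd : p % 2 = 1)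
    (a : ZMod p)
    (W : WeierstrassCurve.Affine (ZMod p)) (hW : W = ⟨0, 2 * a, 0, a ^ 2, 0⟩)
    (e m : ℕ) (hm : Odd m) (hem : p - 1 = 2 ^ e * m)
    (hcard : Nat.card W.Point = p - 1)
    (t : ZMod p) (hnr : (t ^ 2 + a) ^ ((p - 1) / 2) = -1)
    (hP : W.Nonsingular (t ^ 2) (t * (t ^ 2 + a))) :
    m • (WeierstrassCurve.Affine.Point.some _ _ hP) ≠ 0 ∧
      2 ∣ addOrderOf (WeierstrassCurve.Affine.Point.some _ _ hP) := by
  subst hW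
  have hnsq : ¬IsSquare (t ^ 2 + a) :=
    ZMod.not_isSquare_of_pow_div_two_eq_neg_one (by omega)
      (by rwa [show p / 2 = (p - 1) / 2 by omega])
  have hmP : m • Point.some _ _ hP ≠ 0 := fun h => by
    obtain ⟨Q, hQ⟩ := exists_two_nsmul_eq_of_nsmul_eq_zero hm h
    exact hnsq (nodalCubic.isSquare_add_of_two_nsmul_eq hP hQ)
  exact ⟨hmP, two_dvd_addOrderOf_of_nsmul_ne_zero (hcard.trans hem) hmP⟩

theorem cipolla_singular_cubic (p : ℕ) [hp : Fact p.Prime] (hodd : p % 2 = 1)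
    (a : ZMod p) (ha : a ≠ 0) (hQR : ∃ s : ZMod p, s ^ 2 = a)
    (W : WeierstrassCurve.Affine (ZMod p)) (hW : W = ⟨0, 2 * a, 0, a ^ 2, 0⟩)
    (e m : ℕ) (hm : Odd m) (hem : p - 1 = 2 ^ e * m)
    (hcard : Nat.card W.Point = p - 1) (hcyc : IsAddCyclic W.Point)
    (t : ZMod p) (ht : t ≠ 0) (hnr : (t ^ 2 + a) ^ ((p - 1) / 2) = -1)
    (hP : W.Nonsingular (t ^ 2) (t * (t ^ 2 + a))) :
    m • (WeierstrassCurve.Affine.Point.some _ _ hP) ≠ 0 ∧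
      2 ∣ addOrderOf (WeierstrassCurve.Affine.Point.some _ _ hP) :=
  cipolla_singular_cubic_general p (hp := hp) hodd a W hW e m hm hem hcard t hnr hP
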